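/- arXiv:1108.2874 — 5 statements merged into one kernel-verified Lean document; each statement's English description precedes it below -/
import Mathlib

section
/- In a multiplicatively cancellative commutative semiring of characteristic one (i.e., 1 + 1 = 1), the Frobenius identity holds: (x + y)^n = x^n + y^n for every natural number n ≥ 1 and all elements x, y. -/
/-- In a multiplicatively cancellative commutative semiring of characteristic one
(`1 + 1 = 1`), the Frobenius identity `(x + y)^n = x^n + y^n` holds for all `n ≥ 1`. -/
theorem frobenius_char_one {K : Type*} [CommSemiring K]
    (hchar : (1 : K) + 1 = 1)
    (hcanc : ∀ x y z : K, z ≠ 0 → x * z = y * z → x = y)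
    (x y : K) (n : ℕ) (hn : 1 ≤ n) :
    (x + y) ^ n = x ^ n + y ^ n := by
  -- addition is idempotent
  have idem : ∀ a : K, a + a = a := by
    intro a
    calc a + a = a * (1 + 1) := by ring
    _ = a := by rw [hchar, mul_one]
  -- casts of positive naturals are 1
  have hcast : ∀ m : ℕ, ((m + 1 : ℕ) : K) = 1 := by
    intro m
    induction m with
    | zero => simp
    | succ k ih =>
      have : ((k + 1 + 1 : ℕ) : K) = ((k + 1 : ℕ) : K) + 1 := by push_cast; ring
      rw [this, ih, hchar]
  -- binomial expansion with all coefficients 1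
  have hpow : ∀ m : ℕ, (x + y) ^ m =
      ∑ k ∈ Finset.range (m + 1), x ^ k * y ^ (m - k) := by
    intro m
    rw [add_pow]
    refine Finset.sum_congr rfl fun k hk => ?_
    have hk' : k ≤ m := Finset.mem_range_succ_iff.mp hk
    have hpos : 0 < m.choose k := Nat.choose_pos hk'
    have : ((m.choose k : ℕ) : K) = 1 := by
      rw [← Nat.succ_pred_eq_of_pos hpos]
      exact hcast _
    rw [this, mul_one]
  -- absorption: x^n + y^n + (x+y)^n = (x+y)^n
  obtain ⟨m, rfl⟩ : ∃ m, n = m + 1 := ⟨n - 1, (Nat.succ_pred_eq_of_pos hn).symm⟩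
  set n := m + 1 with hn'
  have habs : x ^ n + y ^ n + (x + y) ^ n = (x + y) ^ n := by
    rw [hpow]
    rw [Finset.sum_range_succ, Finset.sum_range_succ']
    simp only [pow_zero, one_mul, mul_one, Nat.sub_zero, Nat.sub_self]
    set R := ∑ k ∈ Finset.range m, x ^ (k + 1) * y ^ (n - (k + 1)) with hR
    have : x ^ n + y ^ n + (R + y ^ n + x ^ n)
        = R + (y ^ n + y ^ n) + (x ^ n + x ^ n) := by ring
    rw [this, idem, idem]
  -- key identity
  have key : (x ^ n + y ^ n) * (x + y) ^ n = (x + y) ^ n * (x + y) ^ n := by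
    rw [← pow_add, hpow n, hpow (n + n)]
    rw [add_mul, Finset.mul_sum, Finset.mul_sum]
    have h1 : ∀ k ∈ Finset.range (n + 1),
        x ^ n * (x ^ k * y ^ (n - k)) = x ^ (n + k) * y ^ (n - k) := by
      intro k hk; rw [pow_add]; ring
    have h2 : ∀ k ∈ Finset.range (n + 1),
        y ^ n * (x ^ k * y ^ (n - k)) = x ^ k * y ^ (n + n - k) := by
      intro k hk
      have hk' : k ≤ n := Finset.mem_range_succ_iff.mp hk
      have : n + n - k = n + (n - k) := by omega
      rw [this, pow_add]; ring
    rw [Finset.sum_congr rfl h1, Finset.sum_congr rfl h2]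
    -- RHS: split range (n+n+1) = range ((n+1) + n)
    have hsplit : (n + n + 1) = (n + 1) + n := by omega
    rw [hsplit, Finset.sum_range_add (fun k => x ^ k * y ^ (n + n - k)) (n + 1) n]
    -- LHS first sum: peel off k = 0
    rw [Finset.sum_range_succ' (fun k => x ^ (n + k) * y ^ (n - k)) n]
    simp only [Nat.sub_zero, Nat.sub_self, pow_zero, mul_one, add_zero]
    have h3 : ∀ k ∈ Finset.range n,
        x ^ (n + (k + 1)) * y ^ (n - (k + 1)) = x ^ (n + 1 + k) * y ^ (n + n - (n + 1 + k)) := by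
      intro k hk
      have hk' : k < n := Finset.mem_range.mp hk
      congr 1 <;> congr 1 <;> omega
    rw [Finset.sum_congr rfl h3]
    set A := ∑ k ∈ Finset.range n, x ^ (n + 1 + k) * y ^ (n + n - (n + 1 + k)) with hA
    set B := ∑ k ∈ Finset.range (n + 1), x ^ k * y ^ (n + n - k) with hB
    -- goal : A + x ^ n * y ^ n + B = B + A
    have hBn : x ^ n * y ^ n + B = B := by
      rw [hB, Finset.sum_range_succ]
      have : n + n - n = n := by omega
      rw [this]
      have : x ^ n * y ^ n + (∑ k ∈ Finset.range n, x ^ k * y ^ (n + n - k) + x ^ n * y ^ n)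
          = ∑ k ∈ Finset.range n, x ^ k * y ^ (n + n - k) + (x ^ n * y ^ n + x ^ n * y ^ n) := by
        ring
      rw [this, idem]
    calc A + x ^ n * y ^ n + B = A + (x ^ n * y ^ n + B) := by ring
      _ = A + B := by rw [hBn]
      _ = B + A := by ring
  by_cases h0 : (x + y) ^ n = 0
  · rw [h0] at habs ⊢
    rw [add_zero] at habs
    rw [habs]
  · exact (hcanc _ _ _ h0 key).symm
end

section
/- The Tsallis entropy Ts_α(p) = (1/(α-1))(1 - p^α - (1-p)^α) satisfies the α-deformed associativity condition: for all p₁, p₂, p₃ ≥ 0 with p₁ + p₂ + p₃ = 1, p₁ < 1 and p₁ + p₂ > 0, Ts_α(p₁) + (1 - p₁)^α · Ts_α(p₂/(1 - p₁)) = Ts_α(p₁ + p₂) + (p₁ + p₂)^α · Ts_α(p₁/(p₁ + p₂)). -/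
/-- Binary Tsallis entropy. -/
noncomputable def Ts (α p : ℝ) : ℝ := (1 / (α - 1)) * (1 - p ^ α - (1 - p) ^ α)

lemma rpow_mul_Ts_div (α : ℝ) {b x : ℝ} (hb : 0 < b) (hx : 0 ≤ x) (hxb : x ≤ b) :
    b ^ α * Ts α (x / b) = (1 / (α - 1)) * (b ^ α - x ^ α - (b - x) ^ α) := by
  have hbα : b ^ α ≠ 0 := (Real.rpow_pos_of_pos hb α).ne'
  have hsub : 1 - x / b = (b - x) / b := by field_simp
  rw [Ts, hsub, Real.div_rpow hx hb.le, Real.div_rpow (sub_nonneg.2 hxb) hb.le]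
  field_simp

theorem tsallis_alpha_associativity_general (α p₁ p₂ p₃ : ℝ)
    (h1 : 0 ≤ p₁) (h2 : 0 ≤ p₂) (h3 : 0 ≤ p₃)
    (hsum : p₁ + p₂ + p₃ = 1) (hlt : p₁ < 1) (hpos : 0 < p₁ + p₂) :
    Ts α p₁ + (1 - p₁) ^ α * Ts α (p₂ / (1 - p₁)) =
      Ts α (p₁ + p₂) + (p₁ + p₂) ^ α * Ts α (p₁ / (p₁ + p₂)) := by
  have hrest₁ : 1 - p₁ - p₂ = p₃ := by linarith
  have hrest₂ : 1 - (p₁ + p₂) = p₃ := by linarith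
  rw [rpow_mul_Ts_div α (sub_pos.2 hlt) h2 (by linarith),
    rpow_mul_Ts_div α hpos h1 (by linarith), add_sub_cancel_left]
  -- both sides are now the Tsallis entropy `(1 - p₁ ^ α - p₂ ^ α - p₃ ^ α) / (α - 1)`
  simp only [Ts, hrest₁, hrest₂]
  ring

/-- The Tsallis entropy satisfies the `α`-deformed associativity condition. -/
theorem tsallis_alpha_associativity (α p₁ p₂ p₃ : ℝ)
    (hα : 0 < α) (hα1 : α ≠ 1)
    (h1 : 0 ≤ p₁) (h2 : 0 ≤ p₂) (h3 : 0 ≤ p₃)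
    (hsum : p₁ + p₂ + p₃ = 1) (hlt : p₁ < 1) (hpos : 0 < p₁ + p₂) :
    Ts α p₁ + (1 - p₁) ^ α * Ts α (p₂ / (1 - p₁)) =
      Ts α (p₁ + p₂) + (p₁ + p₂) ^ α * Ts α (p₁ / (p₁ + p₂)) :=
  tsallis_alpha_associativity_general α p₁ p₂ p₃ h1 h2 h3 hsum hlt hpos
end

section
/- Let S : [0,1] → ℝ be continuous with S(p) = S(1-p) for all p, and define λ(x) = inf_{p∈[0,1]}(p·x - T·S(p)) for fixed T > 0. Then λ(x) - λ(-x) = x for all real x. Conversely, if S is additionally strictly concave and λ(x) - λ(-x) = x for all x, then S(p) = S(1-p) for all p ∈ [0,1]. -/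
/-!
Reflecting `p ↦ 1 - p` gives `λ_S(-x) = λ_{S(1 - ·)}(x) - x`, so `λ(x) - λ(-x) = x` says exactly
that `S` and `S(1 - ·)` have the same transform `λ`; symmetry of `S` gives this at once.
Conversely, if `S` is concave and `c` is the slope of a supporting line of `T S` at an interior
point `p`, the infimum defining `λ_S(c)` is attained at `p`; hence `λ_S ≤ λ_{S'}` forces
`S' ≤ S` on `(0, 1)`. Applied to `S(1 - ·)` at `p` and at `1 - p` this gives symmetry on `(0, 1)`,
and continuity extends it to the endpoints.
-/

open Set

/-- The successor function `λ(x) = inf_{p ∈ [0,1]} (p·x - T·S(p))`. -/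
noncomputable def lam (T : ℝ) (S : ℝ → ℝ) (x : ℝ) : ℝ :=
  ⨅ p : Set.Icc (0 : ℝ) 1, ((p : ℝ) * x - T * S p)

lemma ConvexOn.exists_add_mul_sub_le_of_mem_interior {s : Set ℝ} {f : ℝ → ℝ} {x : ℝ}
    (hf : ConvexOn ℝ s f) (hx : x ∈ interior s) :
    ∃ c : ℝ, ∀ y ∈ s, f x + c * (y - x) ≤ f y := by
  refine ⟨derivWithin f (Iio x) x, fun y hy => ?_⟩
  rcases lt_trichotomy y x with hyx | rfl | hxy
  · have hslope := hf.slope_le_leftDeriv_of_mem_interior hy hx hyx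
    rw [slope_def_field, div_le_iff₀ (sub_pos.2 hyx)] at hslope
    linarith
  · simp
  · have hslope := (hf.leftDeriv_le_rightDeriv_of_mem_interior hx).trans
      (hf.rightDeriv_le_slope_of_mem_interior hx hy hxy)
    rw [slope_def_field, le_div_iff₀ (sub_pos.2 hxy)] at hslope
    linarith

lemma ConcaveOn.exists_le_add_mul_sub_of_mem_interior {s : Set ℝ} {f : ℝ → ℝ} {x : ℝ}
    (hf : ConcaveOn ℝ s f) (hx : x ∈ interior s) :
    ∃ c : ℝ, ∀ y ∈ s, f y ≤ f x + c * (y - x) := by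
  obtain ⟨c, hc⟩ := hf.neg.exists_add_mul_sub_le_of_mem_interior hx
  refine ⟨-c, fun y hy => ?_⟩
  have hcy := hc y hy
  simp only [Pi.neg_apply] at hcy
  linarith

lemma continuousOn_comp_one_sub {S : ℝ → ℝ} (hS : ContinuousOn S (Icc 0 1)) :
    ContinuousOn (fun p => S (1 - p)) (Icc 0 1) :=
  hS.comp (by fun_prop) fun _ hp => Icc.mem_iff_one_sub_mem.mp hp

section lam

variable {T : ℝ} {S S' : ℝ → ℝ}

lemma bddBelow_range_lam (hS : ContinuousOn S (Icc 0 1)) (x : ℝ) :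
    BddBelow (range fun p : Icc (0 : ℝ) 1 => (p : ℝ) * x - T * S p) :=
  (isCompact_range ((continuous_subtype_val.mul continuous_const).sub
    (continuous_const.mul hS.domRestrict))).bddBelow

lemma lam_le (hS : ContinuousOn S (Icc 0 1)) (x : ℝ) {p : ℝ} (hp : p ∈ Icc (0 : ℝ) 1) :
    lam T S x ≤ p * x - T * S p :=
  ciInf_le (bddBelow_range_lam hS x) ⟨p, hp⟩

lemma le_lam {x c : ℝ} (h : ∀ p ∈ Icc (0 : ℝ) 1, c ≤ p * x - T * S p) : c ≤ lam T S x :=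
  le_ciInf fun p => h p p.2

lemma lam_congr (h : EqOn S S' (Icc 0 1)) : lam T S = lam T S' := by
  ext x
  exact iInf_congr fun p => by rw [h p.2]

lemma lam_neg (hS : ContinuousOn S (Icc 0 1)) (x : ℝ) :
    lam T S (-x) = lam T (fun p => S (1 - p)) x - x := by
  rw [sub_eq_add_neg, ← OrderIso.addRight_apply (-x), lam, lam,
    OrderIso.map_ciInf _ (bddBelow_range_lam (continuousOn_comp_one_sub hS) x),
    ← unitInterval.symm_bijective.surjective.iInf_comp]
  refine iInf_congr fun p => ?_
  simp only [unitInterval.coe_symm_eq, OrderIso.addRight_apply]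
  ring

lemma le_of_lam_le_lam (hT : 0 < T) (hS : ConcaveOn ℝ (Icc 0 1) S)
    (hS' : ContinuousOn S' (Icc 0 1)) (h : ∀ x, lam T S x ≤ lam T S' x)
    {p : ℝ} (hp : p ∈ Ioo (0 : ℝ) 1) : S' p ≤ S p := by
  obtain ⟨c, hc⟩ := (hS.smul hT.le).exists_le_add_mul_sub_of_mem_interior
    (by rwa [interior_Icc])
  have hlam : p * c - T * S p ≤ lam T S c := le_lam fun q hq => by
    have hcq := hc q hq
    simp only [smul_eq_mul] at hcq
    linarith
  have hS'p : lam T S' c ≤ p * c - T * S' p := lam_le hS' c (Ioo_subset_Icc_self hp)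
  have hTS : T * S' p ≤ T * S p := by linarith [h c]
  exact le_of_mul_le_mul_left hTS hT

end lam

/-- Symmetry `S(p) = S(1-p)` implies `λ(x) - λ(-x) = x`; conversely, for strictly
concave `S` the identity `λ(x) - λ(-x) = x` implies the symmetry of `S`. -/
theorem lam_commutativity_characterization (S : ℝ → ℝ) (T : ℝ) (hT : 0 < T)
    (hcont : ContinuousOn S (Set.Icc 0 1)) :
    ((∀ p ∈ Set.Icc (0 : ℝ) 1, S p = S (1 - p)) →
      ∀ x : ℝ, lam T S x - lam T S (-x) = x) ∧
    (StrictConcaveOn ℝ (Set.Icc 0 1) S →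
      (∀ x : ℝ, lam T S x - lam T S (-x) = x) →
      ∀ p ∈ Set.Icc (0 : ℝ) 1, S p = S (1 - p)) := by
  set S' := fun p => S (1 - p)
  have hS' : ContinuousOn S' (Icc 0 1) := continuousOn_comp_one_sub hcont
  have hid_iff : ∀ x, lam T S x - lam T S (-x) = x ↔ lam T S x = lam T S' x := fun x => by
    rw [lam_neg hcont]
    constructor <;> intro h <;> linarith
  refine ⟨fun hsym x => (hid_iff x).2 (by rw [lam_congr hsym]), fun hconc hid => ?_⟩
  have hle : ∀ p ∈ Ioo (0 : ℝ) 1, S' p ≤ S p := fun p =>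
    le_of_lam_le_lam hT hconc.concaveOn hS' fun x => ((hid_iff x).1 (hid x)).le
  have hint : EqOn S S' (Ioo 0 1) := fun p hp => by
    have hflip := hle (1 - p) (Ioo.mem_iff_one_sub_mem.mp hp)
    simp only [S', sub_sub_cancel] at hflip
    exact le_antisymm hflip (hle p hp)
  exact hint.of_subset_closure hcont hS' Ioo_subset_Icc_self
    (by rw [closure_Ioo zero_ne_one])
end

section
/- For the Shannon successor function λ(x) = -T·log(1 + e^{-x/T}) with T > 0, the associativity functional equation holds: λ(x - λ(y)) + λ(y) = λ(λ(x - y) + y) for all real x, y. -/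
/-- The Shannon successor function satisfies the associativity functional equation. -/
theorem shannon_lam_associativity (T : ℝ) (hT : 0 < T) (x y : ℝ) :
    (fun z : ℝ => -T * Real.log (1 + Real.exp (-z / T)))
        (x - (fun z : ℝ => -T * Real.log (1 + Real.exp (-z / T))) y) +
      (fun z : ℝ => -T * Real.log (1 + Real.exp (-z / T))) y =
    (fun z : ℝ => -T * Real.log (1 + Real.exp (-z / T)))
        ((fun z : ℝ => -T * Real.log (1 + Real.exp (-z / T))) (x - y) + y) := by
  simp only
  have hT' : T ≠ 0 := ne_of_gt hT
  set u := Real.exp (-x / T) with hu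
  set v := Real.exp (-y / T) with hv
  have hu0 : 0 < u := Real.exp_pos _
  have hv0 : 0 < v := Real.exp_pos _
  have h1v : (0:ℝ) < 1 + v := by linarith
  have h1uv : (0:ℝ) < 1 + u + v := by linarith
  have e1 : Real.exp (-(x - -T * Real.log (1 + v)) / T) = u / (1 + v) := by
    rw [show -(x - -T * Real.log (1 + v)) / T = -x / T + -Real.log (1 + v) by
      field_simp; ring]
    rw [Real.exp_add, Real.exp_neg, Real.exp_log h1v, ← hu, div_eq_mul_inv]
  have exy : Real.exp (-(x - y) / T) = u / v := by
    rw [show -(x - y) / T = -x / T + -(-y / T) by ring, Real.exp_add, Real.exp_neg,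
      ← hu, ← hv, div_eq_mul_inv]
  have e2 : Real.exp (-(-T * Real.log (1 + Real.exp (-(x - y) / T)) + y) / T)
      = u + v := by
    rw [exy]
    have h1uvv : (0:ℝ) < 1 + u / v := by positivity
    rw [show -(-T * Real.log (1 + u / v) + y) / T
        = Real.log (1 + u / v) + -y / T by field_simp; ring]
    rw [Real.exp_add, Real.exp_log h1uvv, ← hv]
    field_simp; ring
  rw [e1, e2]
  rw [show (1:ℝ) + u / (1 + v) = (1 + u + v) / (1 + v) by field_simp; ring]
  rw [Real.log_div h1uv.ne' h1v.ne']
  rw [show (1:ℝ) + (u + v) = 1 + u + v by ring]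
  ring
end

section
/- Let S : [0,1] → ℝ be continuous and concave with S(p) = S(1-p), S(0) = S(1) = 0, and suppose S satisfies the associativity identity S(p₁) + (1-p₁)·S(p₂/(1-p₁)) = S(p₁+p₂) + (p₁+p₂)·S(p₁/(p₁+p₂)) whenever p₁,p₂ ≥ 0, p₁+p₂ ≤ 1, p₁ < 1, p₁+p₂ > 0. Then the n-ary extension Sₙ(p₁,...,pₙ) := ∑_{j=1}^{n-1} (1 - ∑_{i<j} pᵢ)·S(pⱼ/(1 - ∑_{i<j} pᵢ)) is a symmetric function on the probability simplex Δ_{n-1}, for every n ≥ 2. -/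
/-!
Symmetry of `S` turns the associativity identity into the exchange law
`t S(a/t) + (t - a) S(b/(t - a)) = t S(b/t) + (t - b) S(a/(t - b))` for `a, b ≥ 0`, `a + b ≤ t`.
Swapping `pⱼ` and `pⱼ₊₁` leaves every partial sum except `p₀ + ⋯ + pⱼ` unchanged, so it affects
only the `j`-th and `(j+1)`-st terms of `Sₙ`, whose sum is the left side of the exchange law with
`t = 1 - ∑_{i<j} pᵢ`. Hence `Sₙ` is invariant under adjacent transpositions, which generate all
permutations of `{0, …, n-1}`.
-/

/-- The `n`-ary extension of a binary information measure `S` by the telescoping formula.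
Terms with vanishing denominator are `0` (the factor in front vanishes). -/
noncomputable def Sn (S : ℝ → ℝ) (n : ℕ) (p : ℕ → ℝ) : ℝ :=
  ∑ j ∈ Finset.range (n - 1),
    (1 - ∑ i ∈ Finset.range j, p i) *
      S (p j / (1 - ∑ i ∈ Finset.range j, p i))

open Finset Equiv Equiv.Perm

def AssocIdentity (S : ℝ → ℝ) : Prop :=
  ∀ p₁ p₂ : ℝ, 0 ≤ p₁ → 0 ≤ p₂ → p₁ + p₂ ≤ 1 → p₁ < 1 → 0 < p₁ + p₂ →
    S p₁ + (1 - p₁) * S (p₂ / (1 - p₁)) = S (p₁ + p₂) + (p₁ + p₂) * S (p₁ / (p₁ + p₂))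

section Exchange

variable {S : ℝ → ℝ}

theorem AssocIdentity.exchange (hassoc : AssocIdentity S)
    (hsymm : ∀ p ∈ Set.Icc (0 : ℝ) 1, S p = S (1 - p)) (h0 : S 0 = 0)
    {x y : ℝ} (hx : 0 ≤ x) (hy : 0 ≤ y) (hxy : x + y ≤ 1) :
    S x + (1 - x) * S (y / (1 - x)) = S y + (1 - y) * S (x / (1 - y)) := by
  rcases eq_or_ne x y with rfl | hne
  · rfl
  have hpos : 0 < x + y := by
    by_contra h
    exact hne (by linarith)
  rcases (show x ≤ 1 by linarith).lt_or_eq with hx1 | rfl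
  · rcases (show y ≤ 1 by linarith).lt_or_eq with hy1 | rfl
    · have e1 := hassoc x y hx hy hxy hx1 hpos
      have e2 := hassoc y x hy hx (by linarith) hy1 (by linarith)
      have hS : S (x / (x + y)) = S (y / (x + y)) := by
        rw [hsymm _ ⟨by positivity, (div_le_one hpos).2 (by linarith)⟩]
        congr 1
        field_simp
        ring
      rw [add_comm y x] at e2
      rw [e1, e2, hS]
    · obtain rfl : x = 0 := by linarith
      simp [h0]
  · obtain rfl : y = 0 := by linarith
    simp [h0]

theorem AssocIdentity.exchange_scaled (hassoc : AssocIdentity S)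
    (hsymm : ∀ p ∈ Set.Icc (0 : ℝ) 1, S p = S (1 - p)) (h0 : S 0 = 0)
    {t a b : ℝ} (ha : 0 ≤ a) (hb : 0 ≤ b) (hab : a + b ≤ t) :
    t * S (a / t) + (t - a) * S (b / (t - a)) = t * S (b / t) + (t - b) * S (a / (t - b)) := by
  rcases (ha.trans (le_add_of_nonneg_right hb)).trans hab |>.lt_or_eq with ht | rfl
  · have key := hassoc.exchange hsymm h0 (div_nonneg ha ht.le) (div_nonneg hb ht.le)
      (by rw [← add_div, div_le_one ht]; exact hab)
    have hsub : ∀ c, t - c = t * (1 - c / t) := fun c => by field_simp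
    rw [hsub a, hsub b, ← div_div, ← div_div]
    linear_combination t * key
  · obtain rfl : a = 0 := by linarith
    obtain rfl : b = 0 := by linarith
    rfl

end Exchange

theorem Equiv.Perm.mem_mclosure_swap_succ {m : ℕ} {σ : Perm ℕ} (hσ : ∀ i, m + 1 ≤ i → σ i = i) :
    σ ∈ Submonoid.closure (Set.range fun i : Fin m => swap (i : ℕ) (i + 1)) := by
  let e : Fin (m + 1) ≃ {i // i < m + 1} := Fin.equivSubtype
  let φ : Perm (Fin (m + 1)) →* Perm ℕ := ofSubtype.comp e.permCongrHom.toMonoidHom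
  have hφ : φ ∘ (fun i : Fin m => swap i.castSucc i.succ) =
      fun i : Fin m => swap (i : ℕ) (i + 1) := by
    funext i
    change ofSubtype (e.permCongr _) = _
    rw [permCongr_def, symm_trans_swap_trans, ofSubtype_swap_eq]
    rfl
  have hfix : ∀ x, σ x ≠ x → x < m + 1 := fun x hx => by
    by_contra h; exact hx (hσ x (by omega))
  have hmem : ∀ x, σ x < m + 1 ↔ x < m + 1 := fun x => by
    constructor
    · intro h; by_contra h'; exact h' (hσ x (by omega) ▸ h)
    · intro h; by_contra h'; have := σ.injective (hσ (σ x) (by omega)); omega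
  obtain ⟨τ, hτ⟩ : ∃ τ, φ τ = σ := by
    refine ⟨e.permCongrHom.symm (σ.subtypePerm hmem), ?_⟩
    change ofSubtype (e.permCongrHom (e.permCongrHom.symm _)) = σ
    rw [MulEquiv.apply_symm_apply, ofSubtype_subtypePerm _ hfix]
  rw [← hτ, ← hφ, Set.range_comp, ← MonoidHom.map_mclosure, mclosure_swap_castSucc_succ]
  exact Submonoid.mem_map_of_mem φ (Submonoid.mem_top τ)

def IsProbVec (n : ℕ) (p : ℕ → ℝ) : Prop :=
  (∀ i < n, 0 ≤ p i) ∧ ∑ i ∈ range n, p i = 1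

theorem IsProbVec.comp_perm {n : ℕ} {p : ℕ → ℝ} (hp : IsProbVec n p) {σ : Perm ℕ}
    (hσ : ∀ i, n ≤ i → σ i = i) : IsProbVec n (p ∘ σ) := by
  refine ⟨fun i hi => hp.1 _ ?_, ?_⟩
  · by_contra h
    have := σ.injective (hσ (σ i) (by omega))
    omega
  · refine (σ.sum_comp _ p fun i hi => ?_).trans hp.2
    by_contra h
    exact hi (hσ i (by simpa using h))

noncomputable def SnTerm (S : ℝ → ℝ) (p : ℕ → ℝ) (k : ℕ) : ℝ :=
  (1 - ∑ i ∈ range k, p i) * S (p k / (1 - ∑ i ∈ range k, p i))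

section SnTerm

variable {S : ℝ → ℝ}

theorem SnTerm_congr {p q : ℕ → ℝ} {k : ℕ} (hk : p k = q k)
    (hsum : ∑ i ∈ range k, p i = ∑ i ∈ range k, q i) : SnTerm S p k = SnTerm S q k := by
  rw [SnTerm, SnTerm, hk, hsum]

theorem Sn_eq_sum_SnTerm (h1 : S 1 = 0) {n : ℕ} {p : ℕ → ℝ} (hsum : ∑ i ∈ range n, p i = 1) :
    Sn S n p = ∑ k ∈ range n, SnTerm S p k := by
  cases n with
  | zero => simp at hsum
  | succ m =>
    have hlast : 1 - ∑ i ∈ range m, p i = p m := by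
      rw [sum_range_succ] at hsum
      linarith
    rw [sum_range_succ, SnTerm, hlast]
    rcases eq_or_ne (p m) 0 with h | h
    · simp [Sn, SnTerm, h]
    · simp [Sn, SnTerm, h, h1]

theorem Sn_comp_swap_succ (hassoc : AssocIdentity S)
    (hsymm : ∀ p ∈ Set.Icc (0 : ℝ) 1, S p = S (1 - p)) (h0 : S 0 = 0) (h1 : S 1 = 0)
    {n : ℕ} {p : ℕ → ℝ} (hp : IsProbVec n p) {j : ℕ} (hj : j + 1 < n) :
    Sn S n (p ∘ swap j (j + 1)) = Sn S n p := by
  have hswap_fix : ∀ i, n ≤ i → swap j (j + 1) i = i := fun i hi =>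
    swap_apply_of_ne_of_ne (by omega) (by omega)
  set q := p ∘ swap j (j + 1)
  rw [Sn_eq_sum_SnTerm h1 (hp.comp_perm hswap_fix).2, Sn_eq_sum_SnTerm h1 hp.2]
  obtain ⟨m, rfl⟩ : ∃ m, n = j + 2 + m := ⟨n - (j + 2), by omega⟩
  simp only [sum_range_add, sum_range_succ]
  have hq : ∀ i, i ≠ j → i ≠ j + 1 → q i = p i := fun i h h' =>
    congrArg p (swap_apply_of_ne_of_ne h h')
  have hhead : ∀ k ≤ j, ∑ i ∈ range k, q i = ∑ i ∈ range k, p i := fun k hk =>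
    sum_congr rfl fun i hi => hq i (by simp at hi; omega) (by simp at hi; omega)
  have hhead_terms : ∀ k ∈ range j, SnTerm S q k = SnTerm S p k := fun k hk => by
    rw [mem_range] at hk
    exact SnTerm_congr (hq k (by omega) (by omega)) (hhead k hk.le)
  have htail_terms : ∀ k ∈ range m, SnTerm S q (j + 2 + k) = SnTerm S p (j + 2 + k) :=
    fun k _ => SnTerm_congr (hq _ (by omega) (by omega)) <|
      (swap j (j + 1)).sum_comp _ p fun i hi => by
        rw [Set.mem_ofPred_eq, swap_apply_ne_self_iff] at hi
        rw [coe_range, Set.mem_Iio]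
        omega
  have hab : p j + p (j + 1) ≤ 1 - ∑ i ∈ range j, p i := by
    have := sum_le_sum_of_subset_of_nonneg (range_subset_range.2 (by omega : j + 2 ≤ j + 2 + m))
      fun i hi _ => hp.1 i (mem_range.1 hi)
    rw [hp.2, sum_range_succ, sum_range_succ] at this
    linarith
  have hpair : SnTerm S q j + SnTerm S q (j + 1) = SnTerm S p j + SnTerm S p (j + 1) := by
    have hqj : q j = p (j + 1) := congrArg p (swap_apply_left j (j + 1))
    have hqj1 : q (j + 1) = p j := congrArg p (swap_apply_right j (j + 1))
    simp only [SnTerm, sum_range_succ, hhead j le_rfl, hqj, hqj1, sub_add_eq_sub_sub]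
    exact (hassoc.exchange_scaled hsymm h0 (hp.1 j (by omega)) (hp.1 (j + 1) (by omega)) hab).symm
  rw [sum_congr rfl hhead_terms, sum_congr rfl htail_terms]
  linear_combination hpair

end SnTerm

theorem Sn_comp_eq_of_mem_mclosure {S : ℝ → ℝ} (hassoc : AssocIdentity S)
    (hsymm : ∀ p ∈ Set.Icc (0 : ℝ) 1, S p = S (1 - p)) (h0 : S 0 = 0) (h1 : S 1 = 0)
    {m : ℕ} {σ : Perm ℕ}
    (hσ : σ ∈ Submonoid.closure (Set.range fun i : Fin m => swap (i : ℕ) (i + 1)))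
    {p : ℕ → ℝ} (hp : IsProbVec (m + 1) p) :
    IsProbVec (m + 1) (p ∘ σ) ∧ Sn S (m + 1) (p ∘ σ) = Sn S (m + 1) p := by
  induction hσ using Submonoid.closure_induction generalizing p with
  | mem _ hτ =>
    obtain ⟨j, rfl⟩ := hτ
    exact ⟨hp.comp_perm fun i hi => swap_apply_of_ne_of_ne (by omega) (by omega),
      Sn_comp_swap_succ hassoc hsymm h0 h1 hp (by omega)⟩
  | one => exact ⟨hp, rfl⟩
  | mul σ τ _ _ hσ hτ =>
    obtain ⟨hpσ, hSσ⟩ := hσ hp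
    obtain ⟨hpστ, hSστ⟩ := hτ hpσ
    exact ⟨hpστ, hSστ.trans hSσ⟩

theorem Sn_symmetric_general (S : ℝ → ℝ)
    (hsymm : ∀ p ∈ Set.Icc (0 : ℝ) 1, S p = S (1 - p))
    (h0 : S 0 = 0) (h1 : S 1 = 0)
    (hassoc : ∀ p₁ p₂ : ℝ, 0 ≤ p₁ → 0 ≤ p₂ → p₁ + p₂ ≤ 1 → p₁ < 1 → 0 < p₁ + p₂ →
      S p₁ + (1 - p₁) * S (p₂ / (1 - p₁)) =
        S (p₁ + p₂) + (p₁ + p₂) * S (p₁ / (p₁ + p₂)))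
    (n : ℕ) (p : ℕ → ℝ)
    (hp : ∀ i < n, 0 ≤ p i) (hsum : ∑ i ∈ Finset.range n, p i = 1)
    (σ : Equiv.Perm ℕ) (hσ : ∀ i, n ≤ i → σ i = i) :
    Sn S n (p ∘ σ) = Sn S n p := by
  cases n with
  | zero => simp at hsum
  | succ m =>
    exact (Sn_comp_eq_of_mem_mclosure hassoc hsymm h0 h1 (mem_mclosure_swap_succ hσ)
      ⟨hp, hsum⟩).2

/-- If `S` is continuous, concave, symmetric, vanishes at the endpoints, and satisfies
the binary associativity identity, then the `n`-ary extension `Sₙ` is symmetric on the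
probability simplex. -/
theorem Sn_symmetric (S : ℝ → ℝ)
    (hcont : ContinuousOn S (Set.Icc 0 1))
    (hconc : ConcaveOn ℝ (Set.Icc 0 1) S)
    (hsymm : ∀ p ∈ Set.Icc (0 : ℝ) 1, S p = S (1 - p))
    (h0 : S 0 = 0) (h1 : S 1 = 0)
    (hassoc : ∀ p₁ p₂ : ℝ, 0 ≤ p₁ → 0 ≤ p₂ → p₁ + p₂ ≤ 1 → p₁ < 1 → 0 < p₁ + p₂ →
      S p₁ + (1 - p₁) * S (p₂ / (1 - p₁)) =
        S (p₁ + p₂) + (p₁ + p₂) * S (p₁ / (p₁ + p₂)))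
    (n : ℕ) (hn : 2 ≤ n) (p : ℕ → ℝ)
    (hp : ∀ i < n, 0 ≤ p i) (hsum : ∑ i ∈ Finset.range n, p i = 1)
    (σ : Equiv.Perm ℕ) (hσ : ∀ i, n ≤ i → σ i = i) :
    Sn S n (p ∘ σ) = Sn S n p :=
  Sn_symmetric_general S hsymm h0 h1 hassoc n p hp hsum σ hσ
end
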